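/- Two Gaussian sequences with positive definite covariances C₁, C₂ have the property that C₁⁻¹ and C₂⁻¹ agree in all blocks (i,j) with 1 ≤ i,j ≤ N-1 as well as blocks (k,k+1) for 0 ≤ k ≤ N-1 (i.e., they share the same interior reciprocal model parameters A₁,…,A_{N-1}, B₀,…,B_{N-1}) if and only if they share the same reciprocal CM_L model parameters G_k, G_{k,k-1}, G_{k,N} obtained from the unique CM_L factorization of their inverse covariances. Moreover, two Markov sequences sharing these interior parameters share the same forward Markov model (all M_k, M_{k,k-1}) if and only if additionally the (N,N) blocks of C₁⁻¹ and C₂⁻¹ agree, equivalently M_N^{(1)} = M_N^{(2)}. -/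

import Mathlib

open Matrix MeasureTheory

/-- Square `d × d` real matrices (one block). -/
abbrev SqMat (d : ℕ) := Matrix (Fin d) (Fin d) ℝ

/-- Big `(N+1)d × (N+1)d` real matrices, viewed as `(N+1) × (N+1)` arrays of
`d × d` blocks. -/
abbrev BigMat (N d : ℕ) := Matrix (Fin (N+1) × Fin d) (Fin (N+1) × Fin d) ℝ

/-- The `(i,j)` block of a big matrix. -/
def blk {N d : ℕ} (A : BigMat N d) (i j : Fin (N+1)) : SqMat d :=
  fun a b => A (i, a) (j, b)

/-- Block diagonal big matrix with diagonal blocks `D 0, …, D N`. -/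
def bdiag (N d : ℕ) (D : ℕ → SqMat d) : BigMat N d :=
  fun p q => if (p.1 : ℕ) = (q.1 : ℕ) then D (p.1 : ℕ) p.2 q.2 else 0

/-- The block lower bidiagonal matrix `𝓜` of a forward Markov model: identity blocks
on the diagonal and block `-(T k) = -M_{k,k-1}` in position `(k, k-1)` for `k ∈ [1,N]`. -/
def lowerBidiag (N d : ℕ) (T : ℕ → SqMat d) : BigMat N d :=
  fun p q =>
    if (p.1 : ℕ) = (q.1 : ℕ) then (if p.2 = q.2 then 1 else 0)
    else if (q.1 : ℕ) + 1 = (p.1 : ℕ) then -(T (p.1 : ℕ) p.2 q.2) else 0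

/-- The block upper bidiagonal matrix `𝓜ᴮ` of a backward Markov model: identity blocks
on the diagonal and block `-(T k) = -Mᴮ_{k,k+1}` in position `(k, k+1)` for `k ∈ [0,N-1]`. -/
def upperBidiag (N d : ℕ) (T : ℕ → SqMat d) : BigMat N d :=
  fun p q =>
    if (p.1 : ℕ) = (q.1 : ℕ) then (if p.2 = q.2 then 1 else 0)
    else if (p.1 : ℕ) + 1 = (q.1 : ℕ) then -(T (p.1 : ℕ) p.2 q.2) else 0


section Helpers
open Matrix

lemma pd_inv_inj {d : ℕ} {X Y : SqMat d} (hX : X.PosDef) (hY : Y.PosDef)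
    (h : X⁻¹ = Y⁻¹) : X = Y := by
  have hX' : IsUnit X.det := isUnit_iff_ne_zero.2 (ne_of_gt hX.det_pos)
  have hY' : IsUnit Y.det := isUnit_iff_ne_zero.2 (ne_of_gt hY.det_pos)
  calc X = X⁻¹⁻¹ := (Matrix.nonsing_inv_nonsing_inv X hX').symm
  _ = Y⁻¹⁻¹ := by rw [h]
  _ = Y := Matrix.nonsing_inv_nonsing_inv Y hY'

lemma pd_left_cancel {d : ℕ} {G X Y : SqMat d} (hG : G.PosDef)
    (h : G * X = G * Y) : X = Y := by
  have hG' : IsUnit G.det := isUnit_iff_ne_zero.2 (ne_of_gt hG.det_pos)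
  have := congrArg (G⁻¹ * ·) h
  simpa [← Matrix.mul_assoc, Matrix.nonsing_inv_mul G hG'] using this

lemma pd_right_cancel {d : ℕ} {G X Y : SqMat d} (hG : G.PosDef)
    (h : X * G = Y * G) : X = Y := by
  have hG' : IsUnit G.det := isUnit_iff_ne_zero.2 (ne_of_gt hG.det_pos)
  have := congrArg (· * G⁻¹) h
  simpa [Matrix.mul_assoc, Matrix.mul_nonsing_inv G hG'] using this

lemma bdiag_mul_apply {N d : ℕ} (D : ℕ → SqMat d) (B : BigMat N d)
    (p : Fin (N+1)) (c : Fin d) (x : Fin (N+1) × Fin d) :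
    (bdiag N d D * B) (p,c) x = ∑ e : Fin d, D (p:ℕ) c e * B (p,e) x := by
  rw [Matrix.mul_apply, Fintype.sum_prod_type]
  rw [Finset.sum_eq_single p]
  · simp [bdiag]
  · intro q _ hq
    have : ¬ ((p:ℕ) = (q:ℕ)) := fun h => hq ((Fin.ext h).symm)
    simp [bdiag, this]
  · simp

lemma blk_prod_apply {N d : ℕ} (T D : ℕ → SqMat d) (i j : Fin (N+1)) (a b : Fin d) :
    ((lowerBidiag N d T)ᵀ * (bdiag N d D * lowerBidiag N d T)) (i,a) (j,b)
    = ∑ p : Fin (N+1), ∑ c : Fin d, ∑ e : Fin d,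
        lowerBidiag N d T (p,c) (i,a) * (D (p:ℕ) c e * lowerBidiag N d T (p,e) (j,b)) := by
  rw [Matrix.mul_apply, Fintype.sum_prod_type]
  refine Finset.sum_congr rfl fun p _ => Finset.sum_congr rfl fun c _ => ?_
  rw [transpose_apply, bdiag_mul_apply, Finset.mul_sum]

lemma blk_NN {N d : ℕ} (T D : ℕ → SqMat d) :
    blk ((lowerBidiag N d T)ᵀ * bdiag N d D * lowerBidiag N d T)
      ⟨N, Nat.lt_succ_self N⟩ ⟨N, Nat.lt_succ_self N⟩ = D N := by
  ext a b
  show ((lowerBidiag N d T)ᵀ * bdiag N d D * lowerBidiag N d T) (⟨N, Nat.lt_succ_self N⟩, a) (⟨N, Nat.lt_succ_self N⟩, b) = D N a b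
  rw [Matrix.mul_assoc, blk_prod_apply]
  rw [Finset.sum_eq_single (⟨N, Nat.lt_succ_self N⟩ : Fin (N+1))]
  · simp only [lowerBidiag]
    simp [Finset.mul_sum, mul_ite, ite_mul, Finset.sum_ite_eq, Finset.sum_ite_eq']
  · intro q _ hq
    have h1 : ¬((q:ℕ) = N) := fun h => hq (Fin.ext h)
    have h2 : ¬(N + 1 = (q:ℕ)) := by omega
    simp [lowerBidiag, h1, h2]
  · simp

lemma sum_two {N : ℕ} (f : Fin (N+1) → ℝ) (k : ℕ) (hk : k < N)
    (hz : ∀ p : Fin (N+1), (p:ℕ) ≠ k → (p:ℕ) ≠ k+1 → f p = 0) :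
    ∑ p : Fin (N+1), f p = f ⟨k, by omega⟩ + f ⟨k+1, by omega⟩ := by
  have hne : (⟨k, by omega⟩ : Fin (N+1)) ≠ ⟨k+1, by omega⟩ :=
    Fin.ne_of_val_ne (by simp)
  rw [← Finset.sum_pair hne]
  refine (Finset.sum_subset (Finset.subset_univ _) ?_).symm
  intro p _ hp
  simp only [Finset.mem_insert, Finset.mem_singleton] at hp
  push_neg at hp
  exact hz p (fun h => hp.1 (Fin.ext h)) (fun h => hp.2 (Fin.ext h))

lemma blk_kk {N d : ℕ} (T D : ℕ → SqMat d) (k : ℕ) (hk : k < N) :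
    blk ((lowerBidiag N d T)ᵀ * bdiag N d D * lowerBidiag N d T)
      ⟨k, by omega⟩ ⟨k, by omega⟩ = D k + (T (k+1))ᵀ * D (k+1) * T (k+1) := by
  ext a b
  show ((lowerBidiag N d T)ᵀ * bdiag N d D * lowerBidiag N d T) (⟨k, by omega⟩, a) (⟨k, by omega⟩, b)
      = (D k + (T (k+1))ᵀ * D (k+1) * T (k+1)) a b
  rw [Matrix.mul_assoc, blk_prod_apply]
  rw [sum_two _ k hk]
  · have e1 : ¬((k:ℕ)+1 = k) := by omega
    simp only [lowerBidiag, Fin.val_mk, if_pos rfl, if_neg e1]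
    simp only [Matrix.add_apply, Matrix.mul_apply, transpose_apply, Finset.sum_mul]
    simp [Finset.mul_sum, mul_ite, ite_mul, Finset.sum_ite_eq, Finset.sum_ite_eq']
    rw [Finset.sum_comm]
    exact Finset.sum_congr rfl fun x _ => Finset.sum_congr rfl fun y _ => by ring
  · intro p h1 h2
    have h1' : ¬((p:ℕ) = k) := h1
    have h2' : ¬(k + 1 = (p:ℕ)) := fun h => h2 h.symm
    simp [lowerBidiag, h1', h2']

lemma blk_ksucc {N d : ℕ} (T D : ℕ → SqMat d) (k : ℕ) (hk : k < N) :
    blk ((lowerBidiag N d T)ᵀ * bdiag N d D * lowerBidiag N d T)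
      ⟨k, by omega⟩ ⟨k+1, by omega⟩ = -((T (k+1))ᵀ * D (k+1)) := by
  ext a b
  show ((lowerBidiag N d T)ᵀ * bdiag N d D * lowerBidiag N d T) (⟨k, by omega⟩, a) (⟨k+1, by omega⟩, b)
      = (-((T (k+1))ᵀ * D (k+1))) a b
  rw [Matrix.mul_assoc, blk_prod_apply]
  rw [sum_two _ k hk]
  · have e1 : ¬((k:ℕ)+1 = k) := by omega
    have e2 : ¬((k:ℕ) = k+1) := by omega
    have e3 : ¬((k:ℕ)+1+1 = k) := by omega
    simp only [lowerBidiag, Fin.val_mk, if_pos rfl, if_neg e1, if_neg e2, if_neg e3]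
    simp [Finset.mul_sum, mul_ite, ite_mul, Finset.sum_ite_eq, Finset.sum_ite_eq',
      Matrix.neg_apply, Matrix.mul_apply, transpose_apply]
  · intro p h1 h2
    have h1' : ¬((p:ℕ) = k) := h1
    have h2' : ¬(k + 1 = (p:ℕ)) := fun h => h2 h.symm
    simp [lowerBidiag, h1', h2']

end Helpers

/-- let `P₁ = C₁⁻¹`, `P₂ = C₂⁻¹` be the (positive definite) inverse
covariances of two Gaussian sequences and let `(Gcᵢ, Gsᵢ, Gnᵢ)` be the reciprocal
CM_L model parameters obtained from the unique CM_L factorization of `Pᵢ` (i.e.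
satisfying the backward recursion `G_{N-1}⁻¹ = A_{N-1}`, `G_{k,k-1} = -G_k B_{k-1}ᵀ`,
`G_{k-1}⁻¹ = A_{k-1} - G_{k,k-1}ᵀ G_k⁻¹ G_{k,k-1}`, `G_{N-1,N} = -G_{N-1} B_{N-1}`
and the reciprocality propagation `G_{k,N} = G_k G_{k+1,k}ᵀ G_{k+1}⁻¹ G_{k+1,N}`).
Then `P₁` and `P₂` agree in the interior blocks `A₁,…,A_{N-1}, B₀,…,B_{N-1}` iff the
two sequences share the same reciprocal CM_L model parameters.  Moreover, for two
Markov sequences (with `Pᵢ = 𝓜ᵢᵀ Mᵢ⁻¹ 𝓜ᵢ`) sharing these interior blocks, they share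
the same forward Markov model (all `M_k, M_{k,k-1}`, `k ∈ [1,N]`) iff additionally the
`(N,N)` blocks of `P₁` and `P₂` agree, equivalently `M⁽¹⁾_N = M⁽²⁾_N`. -/
theorem markov_sequences_sharing_reciprocal_cml {N d : ℕ} (hN : 2 ≤ N)
    (P₁ P₂ : BigMat N d) (hP₁ : P₁.PosDef) (hP₂ : P₂.PosDef)
    (Gc₁ Gs₁ Gn₁ Gc₂ Gs₂ Gn₂ : ℕ → SqMat d)
    (hGc₁ : ∀ k, 1 ≤ k → k ≤ N - 1 → (Gc₁ k).PosDef)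
    (hGc₂ : ∀ k, 1 ≤ k → k ≤ N - 1 → (Gc₂ k).PosDef)
    (h1a : (Gc₁ (N-1))⁻¹ = blk P₁ ⟨N-1, by omega⟩ ⟨N-1, by omega⟩)
    (h2a : (Gc₂ (N-1))⁻¹ = blk P₂ ⟨N-1, by omega⟩ ⟨N-1, by omega⟩)
    (h1b : ∀ k, ∀ _ : 1 ≤ k, ∀ _ : k ≤ N - 1,
      Gs₁ k = -(Gc₁ k * (blk P₁ ⟨k-1, by omega⟩ ⟨k, by omega⟩)ᵀ))
    (h2b : ∀ k, ∀ _ : 1 ≤ k, ∀ _ : k ≤ N - 1,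
      Gs₂ k = -(Gc₂ k * (blk P₂ ⟨k-1, by omega⟩ ⟨k, by omega⟩)ᵀ))
    (h1c : ∀ k, ∀ _ : 1 ≤ k, ∀ _ : k ≤ N - 2,
      (Gc₁ k)⁻¹ = blk P₁ ⟨k, by omega⟩ ⟨k, by omega⟩
        - (Gs₁ (k+1))ᵀ * (Gc₁ (k+1))⁻¹ * Gs₁ (k+1))
    (h2c : ∀ k, ∀ _ : 1 ≤ k, ∀ _ : k ≤ N - 2,
      (Gc₂ k)⁻¹ = blk P₂ ⟨k, by omega⟩ ⟨k, by omega⟩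
        - (Gs₂ (k+1))ᵀ * (Gc₂ (k+1))⁻¹ * Gs₂ (k+1))
    (h1d : Gn₁ (N-1) = -(Gc₁ (N-1) * blk P₁ ⟨N-1, by omega⟩ ⟨N, by omega⟩))
    (h2d : Gn₂ (N-1) = -(Gc₂ (N-1) * blk P₂ ⟨N-1, by omega⟩ ⟨N, by omega⟩))
    (h1e : ∀ k, 1 ≤ k → k ≤ N - 2 →
      Gn₁ k = Gc₁ k * ((Gs₁ (k+1))ᵀ * (Gc₁ (k+1))⁻¹ * Gn₁ (k+1)))
    (h2e : ∀ k, 1 ≤ k → k ≤ N - 2 →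
      Gn₂ k = Gc₂ k * ((Gs₂ (k+1))ᵀ * (Gc₂ (k+1))⁻¹ * Gn₂ (k+1))) :
    (((∀ k, ∀ _ : 1 ≤ k, ∀ _ : k ≤ N - 1,
          blk P₁ ⟨k, by omega⟩ ⟨k, by omega⟩ = blk P₂ ⟨k, by omega⟩ ⟨k, by omega⟩) ∧
       (∀ k, ∀ _ : k ≤ N - 1,
          blk P₁ ⟨k, by omega⟩ ⟨k+1, by omega⟩ = blk P₂ ⟨k, by omega⟩ ⟨k+1, by omega⟩))
      ↔
      ((∀ k, 1 ≤ k → k ≤ N - 1 → Gc₁ k = Gc₂ k) ∧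
       (∀ k, 1 ≤ k → k ≤ N - 1 → Gs₁ k = Gs₂ k) ∧
       (∀ k, 1 ≤ k → k ≤ N - 1 → Gn₁ k = Gn₂ k))) ∧
    (((∀ k, ∀ _ : 1 ≤ k, ∀ _ : k ≤ N - 1,
          blk P₁ ⟨k, by omega⟩ ⟨k, by omega⟩ = blk P₂ ⟨k, by omega⟩ ⟨k, by omega⟩) ∧
       (∀ k, ∀ _ : k ≤ N - 1,
          blk P₁ ⟨k, by omega⟩ ⟨k+1, by omega⟩ = blk P₂ ⟨k, by omega⟩ ⟨k+1, by omega⟩)) →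
      ∀ Tr₁ M₁ Tr₂ M₂ : ℕ → SqMat d,
        (∀ k ≤ N, (M₁ k).PosDef) → (∀ k ≤ N, (M₂ k).PosDef) →
        P₁ = (lowerBidiag N d Tr₁)ᵀ * bdiag N d (fun k => (M₁ k)⁻¹) *
              lowerBidiag N d Tr₁ →
        P₂ = (lowerBidiag N d Tr₂)ᵀ * bdiag N d (fun k => (M₂ k)⁻¹) *
              lowerBidiag N d Tr₂ →
        (((∀ k, 1 ≤ k → k ≤ N → M₁ k = M₂ k ∧ Tr₁ k = Tr₂ k) ↔
            blk P₁ ⟨N, by omega⟩ ⟨N, by omega⟩ = blk P₂ ⟨N, by omega⟩ ⟨N, by omega⟩) ∧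
         (blk P₁ ⟨N, by omega⟩ ⟨N, by omega⟩ = blk P₂ ⟨N, by omega⟩ ⟨N, by omega⟩ ↔
            M₁ N = M₂ N))) := by
  have hN1 : 1 ≤ N - 1 := by omega
  constructor
  · -- Part 1
    constructor
    · rintro ⟨hA, hB⟩
      have hBshape : ∀ k, ∀ _ : 1 ≤ k, ∀ _ : k ≤ N - 1,
          blk P₁ ⟨k-1, by omega⟩ ⟨k, by omega⟩ = blk P₂ ⟨k-1, by omega⟩ ⟨k, by omega⟩ := by
        intro k hk1 hk2
        have h := hB (k-1) (by omega)
        have e : k - 1 + 1 = k := by omega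
        simpa only [e] using h
      have key : ∀ m, ∀ k, 1 ≤ k → k ≤ N - 1 → N - 1 - k = m →
          Gc₁ k = Gc₂ k ∧ Gs₁ k = Gs₂ k ∧ Gn₁ k = Gn₂ k := by
        intro m
        induction m with
        | zero =>
          intro k hk1 hk2 hm
          have hkN : k = N - 1 := by omega
          subst hkN
          have hGc : Gc₁ (N-1) = Gc₂ (N-1) :=
            pd_inv_inj (hGc₁ _ hk1 hk2) (hGc₂ _ hk1 hk2)
              (h1a.trans ((hA (N-1) hk1 hk2).trans h2a.symm))
          have hGs : Gs₁ (N-1) = Gs₂ (N-1) := by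
            rw [h1b _ hk1 hk2, h2b _ hk1 hk2, hGc, hBshape _ hk1 hk2]
          have hGn : Gn₁ (N-1) = Gn₂ (N-1) := by
            rw [h1d, h2d, hGc]
            have h := hB (N-1) (le_refl _)
            have e : N - 1 + 1 = N := by omega
            simp only [e] at h
            rw [h]
          exact ⟨hGc, hGs, hGn⟩
        | succ m ih =>
          intro k hk1 hk2 hm
          have hk2' : k ≤ N - 2 := by omega
          obtain ⟨ihc, ihs, ihn⟩ := ih (k+1) (by omega) (by omega) (by omega)
          have hGc : Gc₁ k = Gc₂ k := by
            refine pd_inv_inj (hGc₁ _ hk1 hk2) (hGc₂ _ hk1 hk2) ?_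
            rw [h1c _ hk1 hk2', h2c _ hk1 hk2', hA k hk1 hk2, ihc, ihs]
          have hGs : Gs₁ k = Gs₂ k := by
            rw [h1b _ hk1 hk2, h2b _ hk1 hk2, hGc, hBshape _ hk1 hk2]
          have hGn : Gn₁ k = Gn₂ k := by
            rw [h1e _ hk1 hk2', h2e _ hk1 hk2', hGc, ihc, ihs, ihn]
          exact ⟨hGc, hGs, hGn⟩
      exact ⟨fun k h1 h2 => (key _ k h1 h2 rfl).1,
             fun k h1 h2 => (key _ k h1 h2 rfl).2.1,
             fun k h1 h2 => (key _ k h1 h2 rfl).2.2⟩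
    · rintro ⟨hGc, hGs, hGn⟩
      constructor
      · intro k hk1 hk2
        by_cases hk : k = N - 1
        · subst hk
          rw [← h1a, ← h2a, hGc (N-1) hk1 hk2]
        · have hk2' : k ≤ N - 2 := by omega
          have e1 := h1c k hk1 hk2'
          have e2 := h2c k hk1 hk2'
          have f1 : blk P₁ ⟨k, by omega⟩ ⟨k, by omega⟩
              = (Gc₁ k)⁻¹ + (Gs₁ (k+1))ᵀ * (Gc₁ (k+1))⁻¹ * Gs₁ (k+1) :=
            sub_eq_iff_eq_add.mp e1.symm
          have f2 : blk P₂ ⟨k, by omega⟩ ⟨k, by omega⟩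
              = (Gc₂ k)⁻¹ + (Gs₂ (k+1))ᵀ * (Gc₂ (k+1))⁻¹ * Gs₂ (k+1) :=
            sub_eq_iff_eq_add.mp e2.symm
          rw [f1, f2, hGc k hk1 hk2, hGc (k+1) (by omega) (by omega),
            hGs (k+1) (by omega) (by omega)]
      · intro k hk
        by_cases hkk : k ≤ N - 2
        · have e1 := h1b (k+1) (by omega) (by omega)
          have e2 := h2b (k+1) (by omega) (by omega)
          have e : k + 1 - 1 = k := by omega
          simp only [e] at e1 e2
          rw [hGs (k+1) (by omega) (by omega), hGc (k+1) (by omega) (by omega)] at e1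
          have h3 : Gc₂ (k+1) * (blk P₁ ⟨k, by omega⟩ ⟨k+1, by omega⟩)ᵀ
              = Gc₂ (k+1) * (blk P₂ ⟨k, by omega⟩ ⟨k+1, by omega⟩)ᵀ :=
            neg_injective (e1.symm.trans e2)
          have h4 := pd_left_cancel (hGc₂ (k+1) (by omega) (by omega)) h3
          exact Matrix.transpose_inj.mp h4
        · have hkN : k = N - 1 := by omega
          subst hkN
          have e : N - 1 + 1 = N := by omega
          simp only [e]
          rw [hGn (N-1) hN1 le_rfl, hGc (N-1) hN1 le_rfl] at h1d
          have h3 : Gc₂ (N-1) * blk P₁ ⟨N-1, by omega⟩ ⟨N, by omega⟩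
              = Gc₂ (N-1) * blk P₂ ⟨N-1, by omega⟩ ⟨N, by omega⟩ :=
            neg_injective (h1d.symm.trans h2d)
          exact pd_left_cancel (hGc₂ (N-1) hN1 le_rfl) h3
  · -- Part 2
    rintro ⟨hA, hB⟩ Tr₁ M₁ Tr₂ M₂ hM₁ hM₂ hf₁ hf₂
    have f1NN : blk P₁ ⟨N, by omega⟩ ⟨N, by omega⟩ = (M₁ N)⁻¹ := by
      rw [hf₁]; exact blk_NN _ _
    have f2NN : blk P₂ ⟨N, by omega⟩ ⟨N, by omega⟩ = (M₂ N)⁻¹ := by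
      rw [hf₂]; exact blk_NN _ _
    have f1kk : ∀ k, ∀ _ : k < N, blk P₁ ⟨k, by omega⟩ ⟨k, by omega⟩
        = (M₁ k)⁻¹ + (Tr₁ (k+1))ᵀ * (M₁ (k+1))⁻¹ * Tr₁ (k+1) := by
      intro k hk; rw [hf₁]; exact blk_kk _ _ k hk
    have f2kk : ∀ k, ∀ _ : k < N, blk P₂ ⟨k, by omega⟩ ⟨k, by omega⟩
        = (M₂ k)⁻¹ + (Tr₂ (k+1))ᵀ * (M₂ (k+1))⁻¹ * Tr₂ (k+1) := by
      intro k hk; rw [hf₂]; exact blk_kk _ _ k hk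
    have f1ks : ∀ k, ∀ _ : k < N, blk P₁ ⟨k, by omega⟩ ⟨k+1, by omega⟩
        = -((Tr₁ (k+1))ᵀ * (M₁ (k+1))⁻¹) := by
      intro k hk; rw [hf₁]; exact blk_ksucc _ _ k hk
    have f2ks : ∀ k, ∀ _ : k < N, blk P₂ ⟨k, by omega⟩ ⟨k+1, by omega⟩
        = -((Tr₂ (k+1))ᵀ * (M₂ (k+1))⁻¹) := by
      intro k hk; rw [hf₂]; exact blk_ksucc _ _ k hk
    have claim2 : blk P₁ ⟨N, by omega⟩ ⟨N, by omega⟩ = blk P₂ ⟨N, by omega⟩ ⟨N, by omega⟩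
        ↔ M₁ N = M₂ N := by
      rw [f1NN, f2NN]
      exact ⟨fun h => pd_inv_inj (hM₁ N le_rfl) (hM₂ N le_rfl) h, fun h => by rw [h]⟩
    have trEq : ∀ k, 1 ≤ k → k ≤ N → M₁ k = M₂ k → Tr₁ k = Tr₂ k := by
      intro k hk1 hk2 hM
      have hb := hB (k-1) (by omega)
      rw [f1ks (k-1) (by omega), f2ks (k-1) (by omega)] at hb
      have e : k - 1 + 1 = k := by omega
      simp only [e] at hb
      rw [hM] at hb
      have h3 := neg_injective hb
      have h4 := pd_right_cancel (hM₂ k hk2).inv h3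
      exact Matrix.transpose_inj.mp h4
    refine ⟨⟨fun h => ?_, fun hNN => ?_⟩, claim2⟩
    · rw [f1NN, f2NN, (h N (by omega) le_rfl).1]
    · have hMN : M₁ N = M₂ N := claim2.mp hNN
      have down : ∀ m, ∀ k, 1 ≤ k → k ≤ N → N - k = m → M₁ k = M₂ k ∧ Tr₁ k = Tr₂ k := by
        intro m
        induction m with
        | zero =>
          intro k hk1 hk2 hm
          have hkN : k = N := by omega
          rw [hkN]
          exact ⟨hMN, trEq N (by omega) le_rfl hMN⟩
        | succ m ih =>
          intro k hk1 hk2 hm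
          have hkN : k < N := by omega
          obtain ⟨ihM, ihT⟩ := ih (k+1) (by omega) (by omega) (by omega)
          have ha := hA k hk1 (by omega)
          rw [f1kk k hkN, f2kk k hkN, ihM, ihT] at ha
          have hinv : (M₁ k)⁻¹ = (M₂ k)⁻¹ := by
            have := add_right_cancel ha
            exact this
          have hM : M₁ k = M₂ k :=
            pd_inv_inj (hM₁ k (by omega)) (hM₂ k (by omega)) hinv
          exact ⟨hM, trEq k hk1 (by omega) hM⟩
      intro k hk1 hk2
      exact down (N - k) k hk1 hk2 rfl
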